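/- For all positive integers m and n, the rectilinear crossing number of the complete bipartite graph K_{m,n} satisfies rcr(K_{m,n}) ≤ Z(m,n) := ⌊m/2⌋·⌊(m−1)/2⌋·⌊n/2⌋·⌊(n−1)/2⌋. -/

import Mathlib

/-- A rectilinear drawing: an injective map of the vertices into the plane
with no three vertex images collinear. -/
def IsRectilinearDrawing {V : Type*} (f : V → ℝ × ℝ) : Prop :=
  Function.Injective f ∧
    ∀ a b c : V, a ≠ b → a ≠ c → b ≠ c →
      ¬ Collinear ℝ ({f a, f b, f c} : Set (ℝ × ℝ))

/-- The open straight-line segment joining the images of the endpoints of an edge. -/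
def edgeSeg {V : Type*} (f : V → ℝ × ℝ) : Sym2 V → Set (ℝ × ℝ) :=
  Sym2.lift ⟨fun a b => openSegment ℝ (f a) (f b), fun a b => openSegment_symm ℝ (f a) (f b)⟩

/-- Two edges (with disjoint vertex sets) cross if their open segments meet. -/
def EdgesCross {V : Type*} (f : V → ℝ × ℝ) (e₁ e₂ : Sym2 V) : Prop :=
  (∀ v, v ∈ e₁ → v ∉ e₂) ∧ (edgeSeg f e₁ ∩ edgeSeg f e₂).Nonempty

lemma edgesCross_symm {V : Type*} (f : V → ℝ × ℝ) : Symmetric (EdgesCross f) :=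
  fun _ _ h => ⟨fun v hv hv' => h.1 v hv' hv, by rw [Set.inter_comm]; exact h.2⟩

/-- The crossing number of a drawing: the number of unordered pairs of edges of `G`
that cross in the drawing. -/
noncomputable def crossingNumber {V : Type*} (G : SimpleGraph V) (f : V → ℝ × ℝ) : ℕ :=
  Set.ncard {p : Sym2 (Sym2 V) |
    (∀ e ∈ p, e ∈ G.edgeSet) ∧ p ∈ Sym2.fromRel (⟨fun _ _ h => edgesCross_symm f h⟩ : Std.Symm (EdgesCross f))}

/-- The rectilinear crossing number of a graph. -/
noncomputable def rcr {V : Type*} (G : SimpleGraph V) : ℕ :=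
  sInf {k | ∃ f : V → ℝ × ℝ, IsRectilinearDrawing f ∧ crossingNumber G f = k}

/-- The complete balanced `r`-partite graph with `r` parts of size `m`. -/
def completeBalanced (r m : ℕ) : SimpleGraph (Fin r × Fin m) :=
  SimpleGraph.comap Prod.fst ⊤

instance (r m : ℕ) : DecidableRel (completeBalanced r m).Adj :=
  fun u v => inferInstanceAs (Decidable (u.1 ≠ v.1))

/-- The balanced layered graph with `r` layers of size `m`: all edges between
consecutive layers. -/
def layeredGraph (r m : ℕ) : SimpleGraph (Fin r × Fin m) where
  Adj u v := u.1.1 + 1 = v.1.1 ∨ v.1.1 + 1 = u.1.1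
  symm := ⟨fun _ _ h => h.symm⟩
  loopless := ⟨fun u h => by cases h <;> omega⟩

instance (r m : ℕ) : DecidableRel (layeredGraph r m).Adj :=
  fun u v => inferInstanceAs (Decidable (u.1.1 + 1 = v.1.1 ∨ v.1.1 + 1 = u.1.1))

/-- The `s`-fold blow-up of a graph `G`. -/
def blowup {V : Type*} (G : SimpleGraph V) (s : ℕ) : SimpleGraph (V × Fin s) :=
  SimpleGraph.comap Prod.fst G

/-!
Zarankiewicz's drawing puts one class at the integer points `-⌊m/2⌋, …, -1, 1, …, ⌈m/2⌉` of the
x-axis and the other class likewise on the y-axis. Segments in different quadrants never meet, and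
inside one quadrant the edges `a–c` and `b–d` cross iff the outer one of `a, b` is joined to the
inner one of `c, d`. So every crossing is determined by a same-sign pair of labels on each axis,
and there are at most `(C(⌊m/2⌋,2) + C(⌈m/2⌉,2)) (C(⌊n/2⌋,2) + C(⌈n/2⌉,2)) = Z(m,n)` of them.

Collinear triples on the axes are removed by bending them into the parabolas `y = e x²` and
`x = -e y²`. For small `e` every orientation determinant of a mixed triple keeps the sign it has on
the axes, which is all the crossing criterion uses.
-/

open Finset

def orient (p q r : ℝ × ℝ) : ℝ :=
  (q.1 - p.1) * (r.2 - p.2) - (q.2 - p.2) * (r.1 - p.1)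

lemma orient_rotate (p q r : ℝ × ℝ) : orient p q r = orient q r p := by
  unfold orient; ring

lemma not_collinear_of_orient_ne_zero {p q r : ℝ × ℝ} (h : orient p q r ≠ 0) :
    ¬ Collinear ℝ ({p, q, r} : Set (ℝ × ℝ)) := by
  rw [collinear_iff_of_mem (Set.mem_insert p _)]
  rintro ⟨v, hv⟩
  obtain ⟨s, rfl⟩ := hv q (by simp)
  obtain ⟨t, rfl⟩ := hv r (by simp)
  apply h
  simp only [orient, vadd_eq_add, Prod.fst_add, Prod.snd_add, Prod.smul_fst, Prod.smul_snd,
    smul_eq_mul]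
  ring

lemma orient_mul_neg_of_mem_openSegment {p q r s z : ℝ × ℝ} (hpq : z ∈ openSegment ℝ p q)
    (hrs : z ∈ openSegment ℝ r s) (hr : orient p q r ≠ 0) :
    orient p q r * orient p q s < 0 := by
  obtain ⟨α, β, -, -, hαβ, rfl⟩ := hpq
  obtain ⟨γ, δ, hγ, hδ, hγδ, hz⟩ := hrs
  obtain rfl : α = 1 - β := by linarith
  obtain rfl : γ = 1 - δ := by linarith
  have h₁ := congrArg Prod.fst hz
  have h₂ := congrArg Prod.snd hz
  simp only [Prod.fst_add, Prod.snd_add, Prod.smul_fst, Prod.smul_snd, smul_eq_mul] at h₁ h₂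
  -- `orient p q` is affine and vanishes on the line `pq`
  have hzero : (1 - δ) * orient p q r + δ * orient p q s = 0 := by
    unfold orient
    linear_combination (q.1 - p.1) * h₂ - (q.2 - p.2) * h₁
  have hprod : δ * (orient p q r * orient p q s) = -((1 - δ) * orient p q r ^ 2) := by
    linear_combination orient p q r * hzero
  have hsq : 0 < (1 - δ) * orient p q r ^ 2 := by positivity
  exact neg_of_mul_neg_right (by linarith) hδ.le

lemma mul_add_pos_of_abs_lt {x ε : ℝ} (h : |ε| < |x|) : 0 < x * (x + ε) := by
  have : -(|x| * |ε|) ≤ x * ε := by rw [← abs_mul]; exact neg_abs_le _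
  nlinarith [abs_nonneg ε, sq_abs x]

lemma mul_mul_neg_of_mul_neg_of_mul_pos {x F G a c : ℝ} (h : x * (F * G) < 0)
    (hF : 0 < c * F) (hG : 0 < a * G) : x * (a * c) < 0 := by
  have hac : 0 < (a * c) ^ 2 := by
    have := left_ne_zero_of_mul hF.ne'; have := left_ne_zero_of_mul hG.ne'; positivity
  have : x * (a * c) * ((c * F) * (a * G)) = x * (F * G) * (a * c) ^ 2 := by ring
  exact neg_of_mul_neg_left (this ▸ mul_neg_of_neg_of_pos h hac) (mul_pos hF hG).le

lemma mul_pos_of_labels_cross {R : Type*} [CommRing R] [LinearOrder R] [IsStrictOrderedRing R]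
    {a b c d : R} (h₁ : (b - a) * (d - c) * (a * c) < 0) (h₂ : (b - a) * (d - c) * (b * d) < 0) :
    0 < a * b ∧ 0 < c * d := by
  have hprod : 0 < a * b * (c * d) := by
    refine pos_of_mul_pos_right (a := ((b - a) * (d - c)) ^ 2) ?_ (sq_nonneg _)
    calc 0 < (b - a) * (d - c) * (a * c) * ((b - a) * (d - c) * (b * d)) :=
          mul_pos_of_neg_of_neg h₁ h₂
      _ = _ := by ring
  have hab : 0 < a * b := by
    by_contra! hle
    have hab : a * b < 0 := lt_of_le_of_ne hle (left_ne_zero_of_mul hprod.ne')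
    have hcd : c * d < 0 := neg_of_mul_pos_right hprod hle
    have : 0 < a * (b - a) * (c * (d - c)) :=
      mul_pos_of_neg_of_neg (by nlinarith [sq_nonneg a]) (by nlinarith [sq_nonneg c])
    linarith [show a * (b - a) * (c * (d - c)) = (b - a) * (d - c) * (a * c) by ring]
  exact ⟨hab, pos_of_mul_pos_right hprod hab.le⟩

lemma abs_bend_lt {e K x y z t : ℝ} (he : 0 ≤ e) (hK : 4 * e * K ^ 2 ≤ 1) (hK₁ : 1 ≤ K)
    (hx : |x| ≤ K) (hy : |y| ≤ K) (hz : |z| ≤ K) (ht : |t| ≤ K ^ 2) :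
    |e * (e * x ^ 2 * (y + z) + t)| < 1 := by
  have hx2 : x ^ 2 ≤ K ^ 2 := sq_le_sq' (abs_le.1 hx).1 (abs_le.1 hx).2
  have hyz : |y + z| ≤ 2 * K := (abs_add_le y z).trans (by linarith)
  have hex : e * x ^ 2 ≤ 1 / 4 := by nlinarith
  have heK : e * K ≤ 1 / 4 := by nlinarith
  rw [abs_mul, abs_of_nonneg he]
  calc e * |e * x ^ 2 * (y + z) + t| ≤ e * (1 / 4 * (2 * K) + K ^ 2) := by
        gcongr
        refine (abs_add_le _ _).trans (add_le_add ?_ ht)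
        rw [abs_mul, abs_of_nonneg (by positivity)]
        gcongr
    _ < 1 := by nlinarith

def bentX (e a : ℝ) : ℝ × ℝ := (a, e * a ^ 2)

def bentY (e c : ℝ) : ℝ × ℝ := (-(e * c ^ 2), c)

section BentAxes

variable {e K a b c d : ℝ}

lemma orient_bentX_bentX_bentX :
    orient (bentX e a) (bentX e b) (bentX e c) = e * ((b - a) * (c - a) * (c - b)) := by
  simp only [orient, bentX]; ring

lemma orient_bentY_bentY_bentY :
    orient (bentY e a) (bentY e b) (bentY e c) = e * ((b - a) * (c - a) * (c - b)) := by
  simp only [orient, bentY]; ring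

lemma orient_bentX_bentX_bentY : orient (bentX e a) (bentX e b) (bentY e c)
    = (b - a) * (c + e * (e * c ^ 2 * (a + b) + a * b)) := by
  simp only [orient, bentX, bentY]; ring

lemma orient_bentX_bentY_bentY : orient (bentX e a) (bentY e c) (bentY e d)
    = (c - d) * (a + e * (e * a ^ 2 * (c + d) - c * d)) := by
  simp only [orient, bentX, bentY]; ring

lemma pos_mul_bentX_factor (he : 0 ≤ e) (hK : 4 * e * K ^ 2 ≤ 1) (ha : |a| ≤ K) (hb : |b| ≤ K)
    (hc : |c| ∈ Set.Icc 1 K) : 0 < c * (c + e * (e * c ^ 2 * (a + b) + a * b)) := by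
  have hab : |a * b| ≤ K ^ 2 := by
    rw [abs_mul, sq]; exact mul_le_mul ha hb (abs_nonneg b) (by linarith [abs_nonneg a])
  exact mul_add_pos_of_abs_lt <|
    (abs_bend_lt he hK (hc.1.trans hc.2) hc.2 ha hb hab).trans_le hc.1

lemma pos_mul_bentY_factor (he : 0 ≤ e) (hK : 4 * e * K ^ 2 ≤ 1) (ha : |a| ∈ Set.Icc 1 K)
    (hc : |c| ≤ K) (hd : |d| ≤ K) : 0 < a * (a + e * (e * a ^ 2 * (c + d) - c * d)) := by
  have hcd : |-(c * d)| ≤ K ^ 2 := by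
    rw [abs_neg, abs_mul, sq]; exact mul_le_mul hc hd (abs_nonneg d) (by linarith [abs_nonneg c])
  simpa only [sub_eq_add_neg] using mul_add_pos_of_abs_lt <|
    (abs_bend_lt he hK (ha.1.trans ha.2) ha.2 hc hd hcd).trans_le ha.1

lemma orient_bentX_bentX_bentX_ne_zero (he : e ≠ 0) (hab : a ≠ b) (hac : a ≠ c) (hbc : b ≠ c) :
    orient (bentX e a) (bentX e b) (bentX e c) ≠ 0 := by
  rw [orient_bentX_bentX_bentX]
  simpa only [ne_eq, mul_eq_zero, sub_eq_zero, not_or] using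
    ⟨he, ⟨hab.symm, hac.symm⟩, hbc.symm⟩

lemma orient_bentY_bentY_bentY_ne_zero (he : e ≠ 0) (hab : a ≠ b) (hac : a ≠ c) (hbc : b ≠ c) :
    orient (bentY e a) (bentY e b) (bentY e c) ≠ 0 := by
  rw [orient_bentY_bentY_bentY]
  simpa only [ne_eq, mul_eq_zero, sub_eq_zero, not_or] using
    ⟨he, ⟨hab.symm, hac.symm⟩, hbc.symm⟩

lemma orient_bentX_bentX_bentY_ne_zero (he : 0 ≤ e) (hK : 4 * e * K ^ 2 ≤ 1) (ha : |a| ≤ K)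
    (hb : |b| ≤ K) (hc : |c| ∈ Set.Icc 1 K) (hab : a ≠ b) :
    orient (bentX e a) (bentX e b) (bentY e c) ≠ 0 := by
  rw [orient_bentX_bentX_bentY]
  exact mul_ne_zero (sub_ne_zero.2 hab.symm)
    (right_ne_zero_of_mul (pos_mul_bentX_factor he hK ha hb hc).ne')

lemma orient_bentX_bentY_bentY_ne_zero (he : 0 ≤ e) (hK : 4 * e * K ^ 2 ≤ 1)
    (ha : |a| ∈ Set.Icc 1 K) (hc : |c| ≤ K) (hd : |d| ≤ K) (hcd : c ≠ d) :
    orient (bentX e a) (bentY e c) (bentY e d) ≠ 0 := by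
  rw [orient_bentX_bentY_bentY]
  exact mul_ne_zero (sub_ne_zero.2 hcd)
    (right_ne_zero_of_mul (pos_mul_bentY_factor he hK ha hc hd).ne')

lemma bentX_ne_bentY (he : 0 ≤ e) (hK : 4 * e * K ^ 2 ≤ 1) (ha : 1 ≤ |a|) (hc : |c| ≤ K) :
    bentX e a ≠ bentY e c := by
  intro h
  have h₁ : a = -(e * c ^ 2) := congrArg Prod.fst h
  have : c ^ 2 ≤ K ^ 2 := sq_le_sq' (abs_le.1 hc).1 (abs_le.1 hc).2
  rw [h₁, abs_neg, abs_of_nonneg (by positivity)] at ha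
  nlinarith

lemma labels_cross_of_mem_openSegment (he : 0 ≤ e) (hK : 4 * e * K ^ 2 ≤ 1)
    (ha : |a| ∈ Set.Icc 1 K) (hb : |b| ≤ K) (hc : |c| ∈ Set.Icc 1 K) (hd : |d| ≤ K) (hab : a ≠ b)
    {z : ℝ × ℝ} (h₁ : z ∈ openSegment ℝ (bentX e a) (bentY e c))
    (h₂ : z ∈ openSegment ℝ (bentX e b) (bentY e d)) :
    (b - a) * (d - c) * (a * c) < 0 := by
  have h := orient_mul_neg_of_mem_openSegment h₁ h₂ <| by
    rw [← orient_rotate]; exact orient_bentX_bentX_bentY_ne_zero he hK hb ha.2 hc hab.symm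
  rw [← orient_rotate, orient_bentX_bentX_bentY, orient_bentX_bentY_bentY] at h
  refine mul_mul_neg_of_mul_neg_of_mul_pos ?_ (pos_mul_bentX_factor he hK hb ha.2 hc)
    (pos_mul_bentY_factor he hK ha hc.2 hd)
  linarith

end BentAxes

section BentDrawing

variable {α β : Type*} {e K : ℝ} {u : α → ℝ} {w : β → ℝ}

def bentDrawing (e : ℝ) (u : α → ℝ) (w : β → ℝ) : α ⊕ β → ℝ × ℝ :=
  Sum.elim (bentX e ∘ u) (bentY e ∘ w)

lemma bentDrawing_injective (he : 0 ≤ e) (hK : 4 * e * K ^ 2 ≤ 1) (hu : Function.Injective u)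
    (hw : Function.Injective w) (huK : ∀ i, |u i| ∈ Set.Icc 1 K)
    (hwK : ∀ j, |w j| ∈ Set.Icc 1 K) : Function.Injective (bentDrawing e u w) := by
  rintro (i | j) (i' | j') h <;>
    simp only [bentDrawing, Sum.elim_inl, Sum.elim_inr, Function.comp_apply] at h
  · exact congrArg _ (hu (congrArg Prod.fst h))
  · exact (bentX_ne_bentY he hK (huK i).1 (hwK j').2 h).elim
  · exact (bentX_ne_bentY he hK (huK i').1 (hwK j).2 h.symm).elim
  · exact congrArg _ (hw (congrArg Prod.snd h))

lemma orient_bentDrawing_ne_zero (he : 0 < e) (hK : 4 * e * K ^ 2 ≤ 1)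
    (hu : Function.Injective u) (hw : Function.Injective w) (huK : ∀ i, |u i| ∈ Set.Icc 1 K)
    (hwK : ∀ j, |w j| ∈ Set.Icc 1 K) {x y z : α ⊕ β} (hxy : x ≠ y) (hxz : x ≠ z) (hyz : y ≠ z) :
    orient (bentDrawing e u w x) (bentDrawing e u w y) (bentDrawing e u w z) ≠ 0 := by
  rcases x with i | j <;> rcases y with i' | j' <;> rcases z with i'' | j'' <;>
    simp only [ne_eq, Sum.inl.injEq, Sum.inr.injEq] at hxy hxz hyz <;>
    simp only [bentDrawing, Sum.elim_inl, Sum.elim_inr, Function.comp_apply]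
  · exact orient_bentX_bentX_bentX_ne_zero he.ne' (hu.ne hxy) (hu.ne hxz) (hu.ne hyz)
  · exact orient_bentX_bentX_bentY_ne_zero he.le hK (huK i).2 (huK i').2 (hwK j'') (hu.ne hxy)
  · rw [← orient_rotate]
    exact orient_bentX_bentX_bentY_ne_zero he.le hK (huK i'').2 (huK i).2 (hwK j')
      (hu.ne (Ne.symm hxz))
  · exact orient_bentX_bentY_bentY_ne_zero he.le hK (huK i) (hwK j').2 (hwK j'').2 (hw.ne hyz)
  · rw [orient_rotate]
    exact orient_bentX_bentX_bentY_ne_zero he.le hK (huK i').2 (huK i'').2 (hwK j) (hu.ne hyz)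
  · rw [orient_rotate]
    exact orient_bentX_bentY_bentY_ne_zero he.le hK (huK i') (hwK j'').2 (hwK j).2
      (hw.ne (Ne.symm hxz))
  · rw [← orient_rotate]
    exact orient_bentX_bentY_bentY_ne_zero he.le hK (huK i'') (hwK j).2 (hwK j').2 (hw.ne hxy)
  · exact orient_bentY_bentY_bentY_ne_zero he.ne' (hw.ne hxy) (hw.ne hxz) (hw.ne hyz)

lemma isRectilinearDrawing_bentDrawing (he : 0 < e) (hK : 4 * e * K ^ 2 ≤ 1)
    (hu : Function.Injective u) (hw : Function.Injective w) (huK : ∀ i, |u i| ∈ Set.Icc 1 K)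
    (hwK : ∀ j, |w j| ∈ Set.Icc 1 K) : IsRectilinearDrawing (bentDrawing e u w) :=
  ⟨bentDrawing_injective he.le hK hu hw huK hwK, fun _ _ _ hxy hxz hyz =>
    not_collinear_of_orient_ne_zero (orient_bentDrawing_ne_zero he hK hu hw huK hwK hxy hxz hyz)⟩

lemma labels_cross_of_edgesCross (he : 0 ≤ e) (hK : 4 * e * K ^ 2 ≤ 1)
    (hu : Function.Injective u) (huK : ∀ i, |u i| ∈ Set.Icc 1 K)
    (hwK : ∀ j, |w j| ∈ Set.Icc 1 K) {i i' : α} {j j' : β}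
    (h : EdgesCross (bentDrawing e u w) s(Sum.inl i, Sum.inr j) s(Sum.inl i', Sum.inr j')) :
    (u i' - u i) * (w j' - w j) * (u i * w j) < 0 ∧
      (u i' - u i) * (w j' - w j) * (u i' * w j') < 0 := by
  obtain ⟨hdisj, z, hz, hz'⟩ := h
  have hi : u i ≠ u i' := hu.ne <| by
    rintro rfl; exact hdisj _ (Sym2.mem_mk_left _ _) (Sym2.mem_mk_left _ _)
  refine ⟨labels_cross_of_mem_openSegment he hK (huK i) (huK i').2 (hwK j) (hwK j').2 hi hz hz',
    ?_⟩
  have := labels_cross_of_mem_openSegment he hK (huK i') (huK i).2 (hwK j') (hwK j).2 hi.symm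
    hz' hz
  linarith [show (u i - u i') * (w j - w j') = (u i' - u i) * (w j' - w j) by ring]

end BentDrawing

lemma exists_eq_of_mem_edgeSet_completeBipartiteGraph {α β : Type*} {x : Sym2 (α ⊕ β)}
    (hx : x ∈ (completeBipartiteGraph α β).edgeSet) : ∃ i j, x = s(Sum.inl i, Sum.inr j) := by
  induction x using Sym2.ind with
  | _ u v =>
    rcases u with i | j <;> rcases v with i' | j'
    · simp [completeBipartiteGraph] at hx
    · exact ⟨i, j', rfl⟩
    · exact ⟨i', j, Sym2.eq_swap⟩
    · simp [completeBipartiteGraph] at hx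

lemma card_filter_lt_and_iff {α : Type*} [Fintype α] [LinearOrder α] (P : α → Prop)
    [DecidablePred P] :
    #{x : α × α | x.1 < x.2 ∧ (P x.1 ↔ P x.2)}
      = (#{a | P a}).choose 2 + (#{a | ¬P a}).choose 2 := by
  rw [← card_product_filter_lt, ← card_product_filter_lt, ← card_union_of_disjoint]
  · congr 1; ext x; simp only [mem_filter, mem_univ, true_and, mem_union, mem_product]; tauto
  · exact disjoint_left.2 (by simp only [mem_filter, mem_univ, true_and, mem_product]; tauto)

lemma choose_two_add_choose_two_eq (m : ℕ) :
    (m / 2).choose 2 + (m - m / 2).choose 2 = m / 2 * ((m - 1) / 2) := by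
  obtain ⟨k, rfl | rfl⟩ := Nat.even_or_odd' m
  · have : (2 * k - 1) / 2 = k - 1 := by omega
    simp only [Nat.mul_div_cancel_left k two_pos, this, show 2 * k - k = k by omega,
      Nat.choose_two_right]
    have := Nat.div_two_mul_two_of_even (Nat.even_mul_pred_self k)
    omega
  · have h1 : (2 * k + 1) / 2 = k := by omega
    simp only [h1, show 2 * k + 1 - k = k + 1 by omega, show 2 * k + 1 - 1 = 2 * k by omega,
      Nat.mul_div_cancel_left k two_pos, Nat.choose_two_right, Nat.add_sub_cancel]
    have h2 := Nat.div_two_mul_two_of_even (Nat.even_mul_pred_self k)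
    have h3 := Nat.div_two_mul_two_of_even (Nat.even_mul_pred_self (k + 1))
    rw [Nat.add_sub_cancel] at h3
    cases k with
    | zero => rfl
    | succ k => rw [Nat.add_sub_cancel] at h2 ⊢; nlinarith

section Zarankiewicz

variable {m n : ℕ}

/-- The labels `-⌊m/2⌋, …, -1, 1, …, ⌈m/2⌉` in increasing order. -/
def zLabel (m : ℕ) (i : Fin m) : ℤ :=
  if (i : ℕ) < m / 2 then (i : ℤ) - (m / 2 : ℕ) else (i : ℤ) - (m / 2 : ℕ) + 1

lemma zLabel_strictMono (m : ℕ) : StrictMono (zLabel m) := by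
  intro i i' h
  have : (i : ℕ) < i' := h
  unfold zLabel; split_ifs <;> omega

lemma zLabel_neg_iff (i : Fin m) : zLabel m i < 0 ↔ (i : ℕ) < m / 2 := by
  unfold zLabel; split_ifs <;> omega

lemma cast_zLabel_injective (m : ℕ) : Function.Injective fun i : Fin m => (zLabel m i : ℝ) :=
  Int.cast_injective.comp (zLabel_strictMono m).injective

lemma abs_zLabel_mem_Icc (i : Fin m) {K : ℝ} (hK : (m : ℝ) ≤ K) :
    |(zLabel m i : ℝ)| ∈ Set.Icc 1 K := by
  have : 1 ≤ |zLabel m i| ∧ |zLabel m i| ≤ m := by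
    have := i.isLt
    rw [le_abs', abs_le]; unfold zLabel; split_ifs <;> omega
  rw [← Int.cast_abs]
  exact ⟨by exact_mod_cast this.1, le_trans (by exact_mod_cast this.2) hK⟩

lemma side_iff_of_zLabel_mul_pos {x y : Fin m} (h : 0 < zLabel m x * zLabel m y) :
    ((x : ℕ) < m / 2 ↔ (y : ℕ) < m / 2) := by
  rw [← zLabel_neg_iff, ← zLabel_neg_iff]; exact neg_iff_neg_of_mul_pos h

def sameSidePairs (m : ℕ) : Finset (Fin m × Fin m) :=
  {x | x.1 < x.2 ∧ ((x.1 : ℕ) < m / 2 ↔ (x.2 : ℕ) < m / 2)}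

lemma card_sameSidePairs (m : ℕ) : #(sameSidePairs m) = m / 2 * ((m - 1) / 2) := by
  have hlt : #{i : Fin m | (i : ℕ) < m / 2} = m / 2 := by
    rw [Fin.card_filter_val_lt, min_eq_right (Nat.div_le_self m 2)]
  have hge : #{i : Fin m | ¬(i : ℕ) < m / 2} = m - m / 2 := by
    have := card_filter_add_card_filter_not (s := univ) (fun i : Fin m => (i : ℕ) < m / 2)
    rw [hlt, card_univ, Fintype.card_fin] at this
    omega
  rw [sameSidePairs, card_filter_lt_and_iff (fun i : Fin m => (i : ℕ) < m / 2), hlt, hge,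
    choose_two_add_choose_two_eq]

/-- Of the two matchings between `i < i'` and `j < j'`, the one that crosses in Zarankiewicz's
drawing: within a quadrant, the label of larger modulus on one axis is joined to the label of
smaller modulus on the other. -/
def crossingPair (m n : ℕ) (x : (Fin m × Fin m) × (Fin n × Fin n)) :
    Sym2 (Sym2 (Fin m ⊕ Fin n)) :=
  if zLabel m x.1.1 * zLabel n x.2.1 < 0 then
    s(s(Sum.inl x.1.1, Sum.inr x.2.1), s(Sum.inl x.1.2, Sum.inr x.2.2))
  else
    s(s(Sum.inl x.1.1, Sum.inr x.2.2), s(Sum.inl x.1.2, Sum.inr x.2.1))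

lemma mem_image_crossingPair {i i' : Fin m} {j j' : Fin n} (hi : i < i')
    (h₁ : (zLabel m i' - zLabel m i) * (zLabel n j' - zLabel n j) * (zLabel m i * zLabel n j) < 0)
    (h₂ : (zLabel m i' - zLabel m i) * (zLabel n j' - zLabel n j)
      * (zLabel m i' * zLabel n j') < 0) :
    s(s(Sum.inl i, Sum.inr j), s(Sum.inl i', Sum.inr j'))
      ∈ (sameSidePairs m ×ˢ sameSidePairs n).image (crossingPair m n) := by
  have hj : j ≠ j' := by rintro rfl; simp at h₁
  have hba := sub_pos.2 (zLabel_strictMono m hi)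
  set a := zLabel m i; set b := zLabel m i'; set c := zLabel n j; set d := zLabel n j'
  obtain ⟨hab, hcd⟩ := mul_pos_of_labels_cross h₁ h₂
  have hii : (i, i') ∈ sameSidePairs m := by
    simp only [sameSidePairs, mem_filter, mem_univ, true_and]
    exact ⟨hi, side_iff_of_zLabel_mul_pos hab⟩
  rcases lt_or_gt_of_ne hj with hj | hj
  · have hac : a * c < 0 :=
      neg_of_mul_neg_right h₁ (mul_pos hba (sub_pos.2 (zLabel_strictMono n hj))).le
    refine mem_image.2 ⟨((i, i'), (j, j')), mem_product.2 ⟨hii, ?_⟩,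
      by simp [crossingPair, a, c, hac]⟩
    simp only [sameSidePairs, mem_filter, mem_univ, true_and]
    exact ⟨hj, side_iff_of_zLabel_mul_pos hcd⟩
  · have hac : 0 < a * c :=
      pos_of_mul_neg_right h₁ (mul_neg_of_pos_of_neg hba (sub_neg.2 (zLabel_strictMono n hj))).le
    have had : 0 < a * d := pos_of_mul_pos_left
      (by linarith [mul_pos hac hcd, show a * c * (c * d) = a * d * (c * c) by ring])
      (mul_self_nonneg c)
    refine mem_image.2 ⟨((i, i'), (j', j)), mem_product.2 ⟨hii, ?_⟩,
      by simp [crossingPair, a, d, had.le]⟩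
    simp only [sameSidePairs, mem_filter, mem_univ, true_and]
    exact ⟨hj, side_iff_of_zLabel_mul_pos (by rwa [mul_comm])⟩

noncomputable def zEps (m n : ℕ) : ℝ := 1 / (4 * ((m : ℝ) + n + 1) ^ 2)

lemma zEps_pos (m n : ℕ) : 0 < zEps m n := by
  unfold zEps; positivity

lemma four_mul_zEps_mul_sq_le (m n : ℕ) : 4 * zEps m n * ((m : ℝ) + n + 1) ^ 2 ≤ 1 :=
  le_of_eq (by unfold zEps; field_simp)

noncomputable def zDrawing (m n : ℕ) : Fin m ⊕ Fin n → ℝ × ℝ :=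
  bentDrawing (zEps m n) (fun i => (zLabel m i : ℝ)) (fun j => (zLabel n j : ℝ))

lemma isRectilinearDrawing_zDrawing (m n : ℕ) : IsRectilinearDrawing (zDrawing m n) :=
  isRectilinearDrawing_bentDrawing (zEps_pos m n) (four_mul_zEps_mul_sq_le m n)
    (cast_zLabel_injective m) (cast_zLabel_injective n)
    (fun i => abs_zLabel_mem_Icc i (by linarith [(n.cast_nonneg : (0 : ℝ) ≤ n)]))
    (fun j => abs_zLabel_mem_Icc j (by linarith [(m.cast_nonneg : (0 : ℝ) ≤ m)]))

lemma mem_image_crossingPair_of_edgesCross {i i' : Fin m} {j j' : Fin n}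
    (h : EdgesCross (zDrawing m n) s(Sum.inl i, Sum.inr j) s(Sum.inl i', Sum.inr j')) :
    s(s(Sum.inl i, Sum.inr j), s(Sum.inl i', Sum.inr j'))
      ∈ (sameSidePairs m ×ˢ sameSidePairs n).image (crossingPair m n) := by
  wlog hi : i < i' generalizing i i' j j'
  · rw [Sym2.eq_swap]
    refine this (edgesCross_symm _ h) (lt_of_le_of_ne (not_lt.1 hi) ?_)
    rintro rfl; exact h.1 _ (Sym2.mem_mk_left _ _) (Sym2.mem_mk_left _ _)
  obtain ⟨h₁, h₂⟩ := labels_cross_of_edgesCross (zEps_pos m n).le (four_mul_zEps_mul_sq_le m n)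
    (cast_zLabel_injective m)
    (fun i => abs_zLabel_mem_Icc i (by linarith [(n.cast_nonneg : (0 : ℝ) ≤ n)]))
    (fun j => abs_zLabel_mem_Icc j (by linarith [(m.cast_nonneg : (0 : ℝ) ≤ m)])) h
  exact mem_image_crossingPair hi (by exact_mod_cast h₁) (by exact_mod_cast h₂)

lemma crossingNumber_zDrawing_le (m n : ℕ) :
    crossingNumber (completeBipartiteGraph (Fin m) (Fin n)) (zDrawing m n)
      ≤ #(sameSidePairs m) * #(sameSidePairs n) := by
  rw [← card_product]
  refine (Set.ncard_le_ncard (t := (sameSidePairs m ×ˢ sameSidePairs n).image (crossingPair m n))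
    ?_ (Finset.finite_toSet _)).trans ((Set.ncard_coe_finset _).trans_le card_image_le)
  intro p
  induction p using Sym2.ind with
  | _ e₁ e₂ =>
    rintro ⟨hp, hcross⟩
    obtain ⟨i, j, rfl⟩ := exists_eq_of_mem_edgeSet_completeBipartiteGraph
      (hp e₁ (Sym2.mem_mk_left _ _))
    obtain ⟨i', j', rfl⟩ := exists_eq_of_mem_edgeSet_completeBipartiteGraph
      (hp e₂ (Sym2.mem_mk_right _ _))
    exact mem_image_crossingPair_of_edgesCross (Sym2.fromRel_prop.1 hcross)

end Zarankiewicz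

theorem stmt16_general (m n : ℕ) :
    rcr (completeBipartiteGraph (Fin m) (Fin n))
      ≤ m / 2 * ((m - 1) / 2) * (n / 2) * ((n - 1) / 2) :=
  calc rcr _ ≤ crossingNumber _ (zDrawing m n) :=
        Nat.sInf_le ⟨_, isRectilinearDrawing_zDrawing m n, rfl⟩
    _ ≤ #(sameSidePairs m) * #(sameSidePairs n) := crossingNumber_zDrawing_le m n
    _ = _ := by rw [card_sameSidePairs, card_sameSidePairs]; ring

/-- Zarankiewicz's bound:
`rcr(K_{m,n}) ≤ ⌊m/2⌋·⌊(m−1)/2⌋·⌊n/2⌋·⌊(n−1)/2⌋`. -/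
theorem stmt16 (m n : ℕ) (hm : 0 < m) (hn : 0 < n) :
    rcr (completeBipartiteGraph (Fin m) (Fin n))
      ≤ m / 2 * ((m - 1) / 2) * (n / 2) * ((n - 1) / 2) :=
  stmt16_general m n
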